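/- arXiv:0904.3183 — 6 statements merged into one kernel-verified Lean document; each statement's English description precedes it below -/
import Mathlib

section
/- Let L be a finite lattice and f : L^n → ℝ submodular. Define f'(x) = min over all y ≤ x of f(y). Then f' is submodular. -/
/-! If `f' a` and `f' b` are attained at `ya ≤ a` and `yb ≤ b`, then `ya ⊓ yb ≤ a ⊓ b` and
`ya ⊔ yb ≤ a ⊔ b` are competitors for `f' (a ⊓ b)` and `f' (a ⊔ b)`, so submodularity of `f`
at `ya, yb` bounds `f' (a ⊓ b) + f' (a ⊔ b)` by `f ya + f yb = f' a + f' b`. -/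

open Set

variable {α β : Type*} [Lattice α]

def Submodular [Add β] [LE β] (f : α → β) : Prop :=
  ∀ a b, f (a ⊓ b) + f (a ⊔ b) ≤ f a + f b

section Finite

variable [Finite α] [ConditionallyCompleteLinearOrder β]

theorem sInf_image_Iic_le (f : α → β) {x y : α} (h : y ≤ x) : sInf (f '' Iic x) ≤ f y :=
  csInf_le (toFinite _).bddBelow ⟨y, h, rfl⟩

theorem exists_le_eq_sInf_image_Iic (f : α → β) (x : α) : ∃ y ≤ x, f y = sInf (f '' Iic x) :=
  (nonempty_Iic.image f).csInf_mem (toFinite _)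

theorem Submodular.sInf_image_Iic [AddCommMonoid β] [IsOrderedAddMonoid β] {f : α → β}
    (hf : Submodular f) :
    Submodular fun x ↦ sInf (f '' Iic x) := by
  intro a b
  obtain ⟨ya, hya, hfa⟩ := exists_le_eq_sInf_image_Iic f a
  obtain ⟨yb, hyb, hfb⟩ := exists_le_eq_sInf_image_Iic f b
  calc sInf (f '' Iic (a ⊓ b)) + sInf (f '' Iic (a ⊔ b))
      ≤ f (ya ⊓ yb) + f (ya ⊔ yb) :=
        add_le_add (sInf_image_Iic_le f (inf_le_inf hya hyb))
          (sInf_image_Iic_le f (sup_le_sup hya hyb))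
    _ ≤ f ya + f yb := hf ya yb
    _ = sInf (f '' Iic a) + sInf (f '' Iic b) := by rw [hfa, hfb]

end Finite

/-- f'(x) = min_{y ≤ x} f(y) is submodular whenever f is. -/
theorem stmt1 {L : Type} [Lattice L] [Fintype L] {n : ℕ}
    (f : (Fin n → L) → ℝ)
    (hf : ∀ a b : Fin n → L, f (a ⊓ b) + f (a ⊔ b) ≤ f a + f b)
    (f' : (Fin n → L) → ℝ)
    (hf' : ∀ x : Fin n → L, f' x = sInf (f '' {y | y ≤ x})) :
    ∀ a b : Fin n → L, f' (a ⊓ b) + f' (a ⊔ b) ≤ f' a + f' b := by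
  obtain rfl : f' = fun x ↦ sInf (f '' Iic x) := funext hf'
  exact Submodular.sInf_image_Iic hf
end

section
/- Let M be a diamond lattice with atom set A, f : M^n → ℝ submodular, and x ∈ P_M(f), i.e., x : [n] × A → ℝ satisfies x(y) ≤ f(y) for all y ∈ M^n. If a, b ∈ M^n are x-tight (x(a) = f(a) and x(b) = f(b)), then a ⊔ b and a ⊓ b are also x-tight. -/
set_option linter.unreachableTactic false
set_option linter.unusedTactic false
set_option linter.unusedVariables false

inductive Dia (A : Type) : Type where
  | bot : Dia A
  | atom : A → Dia A
  | top : Dia A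
  deriving DecidableEq

namespace Dia

variable {A : Type} [DecidableEq A]

instance : Lattice (Dia A) where
  le x y := x = bot ∨ y = top ∨ x = y
  le_refl x := Or.inr (Or.inr rfl)
  le_trans x y z hxy hyz := by
    rcases hxy with h | h | h <;> rcases hyz with h' | h' | h' <;> simp_all
  le_antisymm x y hxy hyx := by
    rcases hxy with h | h | h <;> rcases hyx with h' | h' | h' <;> simp_all
  sup x y := if x = bot then y else if y = bot then x else if x = y then x else top
  inf x y := if x = top then y else if y = top then x else if x = y then x else bot
  le_sup_left x y := by
    try dsimp only
    split_ifs <;> (try simp_all) <;> (try split_ifs) <;> (try simp_all)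
  le_sup_right x y := by
    try dsimp only
    split_ifs <;> (try simp_all) <;> (try split_ifs) <;> (try simp_all)
  sup_le x y z hxz hyz := by
    try dsimp only
    rcases hxz with h | h | h <;> rcases hyz with h' | h' | h' <;> split_ifs <;> (try simp_all) <;> (try split_ifs) <;> (try simp_all)
  inf_le_left x y := by
    try dsimp only
    split_ifs <;> (try simp_all) <;> (try split_ifs) <;> (try simp_all)
  inf_le_right x y := by
    try dsimp only
    split_ifs <;> (try simp_all) <;> (try split_ifs) <;> (try simp_all)
  le_inf x y z hxy hxz := by
    try dsimp only
    rcases hxy with h | h | h <;> rcases hxz with h' | h' | h' <;> split_ifs <;> (try simp_all) <;> (try split_ifs) <;> (try simp_all)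

instance : BoundedOrder (Dia A) where
  top := top
  bot := bot
  le_top x := Or.inr (Or.inl rfl)
  bot_le x := Or.inl rfl

def drank : Dia A → ℕ
  | bot => 0
  | atom _ => 1
  | top => 2

noncomputable def gval (v : A → ℝ) : Dia A → ℝ
  | bot => 0
  | atom a => v a
  | top => sSup {r : ℝ | ∃ a a' : A, a ≠ a' ∧ r = v a + v a'}

end Dia

variable {A : Type} [DecidableEq A] {n : ℕ}

noncomputable def evalD (x : Fin n → A → ℝ) (y : Fin n → Dia A) : ℝ :=
  ∑ i, Dia.gval (x i) (y i)

def Submod (f : (Fin n → Dia A) → ℝ) : Prop :=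
  ∀ a b, f (a ⊓ b) + f (a ⊔ b) ≤ f a + f b

def InP (f : (Fin n → Dia A) → ℝ) (x : Fin n → A → ℝ) : Prop :=
  ∀ y, evalD x y ≤ f y

def UnifiedRow (v : A → ℝ) : Prop :=
  ∃ p : A, (∀ a b : A, a ≠ p → b ≠ p → v a = v b) ∧ ∀ a, v a ≤ v p

def Unified (x : Fin n → A → ℝ) : Prop := ∀ i, UnifiedRow (x i)

/-
Since y ↦ x(y) is supermodular and f is submodular,
  f a + f b = x(a) + x(b) ≤ x(a ⊓ b) + x(a ⊔ b) ≤ f (a ⊓ b) + f (a ⊔ b) ≤ f a + f b,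
so equality holds throughout, and as x(·) ≤ f pointwise, both a ⊓ b and a ⊔ b are tight.
Supermodularity of x(·) is checked coordinatewise; the only nontrivial case is two distinct
atoms, with meet 0 and join 1, where v a + v a' ≤ g(v, 1).
-/

theorem eq_and_eq_of_supermodular_le_submodular {L : Type*} [Lattice L] {g f : L → ℝ}
    (hg : ∀ a b, g a + g b ≤ g (a ⊓ b) + g (a ⊔ b))
    (hf : ∀ a b, f (a ⊓ b) + f (a ⊔ b) ≤ f a + f b) (hle : ∀ y, g y ≤ f y) {a b : L}
    (ha : g a = f a) (hb : g b = f b) :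
    g (a ⊔ b) = f (a ⊔ b) ∧ g (a ⊓ b) = f (a ⊓ b) := by
  have hsup := hle (a ⊔ b)
  have hinf := hle (a ⊓ b)
  have hsuper := hg a b
  have hsub := hf a b
  constructor <;> linarith

namespace Dia

theorem add_le_gval_top {A : Type} [Finite A] (v : A → ℝ) {a a' : A} (h : a ≠ a') :
    v a + v a' ≤ gval v top := by
  refine le_csSup ?_ ⟨a, a', h, rfl⟩
  refine (Set.finite_range fun p : A × A => v p.1 + v p.2).bddAbove.mono ?_
  rintro r ⟨a, a', -, rfl⟩
  exact ⟨(a, a'), rfl⟩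

variable {A : Type} [DecidableEq A]

theorem inf_def (y z : Dia A) :
    y ⊓ z = if y = top then z else if z = top then y else if y = z then y else bot := rfl

theorem sup_def (y z : Dia A) :
    y ⊔ z = if y = bot then z else if z = bot then y else if y = z then y else top := rfl

theorem gval_add_le_gval_inf_add_gval_sup [Finite A] (v : A → ℝ) (y z : Dia A) :
    gval v y + gval v z ≤ gval v (y ⊓ z) + gval v (y ⊔ z) := by
  rw [inf_def, sup_def]
  cases y with
  | atom a =>
    cases z with
    | atom a' =>
      by_cases h : a = a'
      · simp [h]
      · simpa [h, gval] using add_le_gval_top v h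
    | _ => simp [gval, add_comm]
  | _ => cases z <;> simp [gval, add_comm]

end Dia

theorem evalD_add_le_evalD_inf_add_evalD_sup {A : Type} [DecidableEq A] [Finite A] {n : ℕ}
    (x : Fin n → A → ℝ) (a b : Fin n → Dia A) :
    evalD x a + evalD x b ≤ evalD x (a ⊓ b) + evalD x (a ⊔ b) := by
  simp only [evalD, ← Finset.sum_add_distrib]
  exact Finset.sum_le_sum fun i _ => Dia.gval_add_le_gval_inf_add_gval_sup (x i) (a i) (b i)

theorem stmt2_general [Fintype A]
    (f : (Fin n → Dia A) → ℝ) (hf : Submod f)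
    (x : Fin n → A → ℝ) (hx : InP f x)
    (a b : Fin n → Dia A)
    (ha : evalD x a = f a) (hb : evalD x b = f b) :
    evalD x (a ⊔ b) = f (a ⊔ b) ∧ evalD x (a ⊓ b) = f (a ⊓ b) :=
  eq_and_eq_of_supermodular_le_submodular (evalD_add_le_evalD_inf_add_evalD_sup x) hf hx ha hb

/-- if a, b are x-tight then so are a ⊔ b and a ⊓ b. -/
theorem stmt2 [Fintype A] (hA : 3 ≤ Fintype.card A)
    (f : (Fin n → Dia A) → ℝ) (hf : Submod f)
    (x : Fin n → A → ℝ) (hx : InP f x)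
    (a b : Fin n → Dia A)
    (ha : evalD x a = f a) (hb : evalD x b = f b) :
    evalD x (a ⊔ b) = f (a ⊔ b) ∧ evalD x (a ⊓ b) = f (a ⊓ b) :=
  stmt2_general f hf x hx a b ha hb
end

section
/- Let M be a diamond with atoms A, n ≥ 1, and f : M^n → ℝ submodular with f(0) = 0. Then min over x ∈ M^n of f(x) equals max of z(1_{M^n}) over all unified vectors z : [n] × A → ℝ with z ≤ 0 and z ∈ P_M(f). Moreover if f is integer-valued the maximum is attained by an integer-valued vector z. -/
set_option linter.unreachableTactic false
set_option linter.unusedTactic false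
set_option linter.unusedVariables false

variable {A : Type} [DecidableEq A] {n : ℕ}

/-!
Induction on the number of coordinates, splitting off the first one: `x = (d, y)`.
From the slice `h d = f (d, ⊥)` one builds a unified nonpositive row `v`: the value
`min 0 (max_a h a)` at an atom maximising `h`, and elsewhere the largest value that keeps `v`
unified with `gval v ≤ h`. As `gval v` is supermodular, `f' y = min_d (f (d, y) - gval v d)`
is again submodular with `f' ⊥ = 0`, and submodularity of `f` on the pairs `(d, ⊥)`, `(d', y)`
gives `min f' ≥ min f - gval v ⊤`. Prepending `v` to a vector for `f'` gives `z ∈ P_M(f)` with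
`z(1) ≥ min f`; conversely `z(1) ≤ z(x) ≤ f x` for every unified `z ≤ 0` in `P_M(f)`.
Every entry of `z` is obtained from values of `f` by `+`, `-` and `min`, whence integrality.
-/

namespace Dia

section Basic

variable {A : Type}

instance : Nonempty (Dia A) := ⟨bot⟩

@[simp] lemma gval_atom (v : A → ℝ) (a : A) : gval v (atom a) = v a := rfl

variable [DecidableEq A]

instance [Fintype A] : Fintype (Dia A) where
  elems := {bot, top} ∪ Finset.univ.image atom
  complete := by intro x; cases x <;> simp

@[simp] lemma bot_eq : (bot : Dia A) = ⊥ := rfl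

@[simp] lemma top_eq : (top : Dia A) = ⊤ := rfl

lemma atom_inf_atom {a b : A} (hab : a ≠ b) : atom a ⊓ atom b = ⊥ := by
  change ite _ _ _ = _; simp [hab]

lemma atom_sup_atom {a b : A} (hab : a ≠ b) : atom a ⊔ atom b = ⊤ := by
  change ite _ _ _ = _; simp [hab]

@[simp] lemma gval_bot (v : A → ℝ) : gval v ⊥ = 0 := rfl

def peakRow (p : A) (α β : ℝ) : A → ℝ := fun a => if a = p then α else β

section PeakRow

variable {p : A} {α β : ℝ}

@[simp] lemma peakRow_self : peakRow p α β p = α := if_pos rfl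

lemma peakRow_of_ne {a : A} (ha : a ≠ p) : peakRow p α β a = β := if_neg ha

lemma peakRow_le (hβα : β ≤ α) (a : A) : peakRow p α β a ≤ α := by
  by_cases ha : a = p
  · rw [ha, peakRow_self]
  · rwa [peakRow_of_ne ha]

lemma unifiedRow_peakRow (hβα : β ≤ α) : UnifiedRow (peakRow p α β) :=
  ⟨p, fun a b ha hb => by rw [peakRow_of_ne ha, peakRow_of_ne hb],
    fun a => (peakRow_le hβα a).trans_eq peakRow_self.symm⟩

lemma peakRow_add_le (hβα : β ≤ α) {a a' : A} (haa' : a ≠ a') :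
    peakRow p α β a + peakRow p α β a' ≤ α + β := by
  by_cases ha : a = p
  · subst ha
    rw [peakRow_self, peakRow_of_ne haa'.symm]
  · rw [peakRow_of_ne ha]
    linarith [peakRow_le (p := p) hβα a']

lemma peakRow_mem {G : AddSubgroup ℝ} (hα : α ∈ G) (hβ : β ∈ G) (a : A) :
    peakRow p α β a ∈ G := by
  unfold peakRow; split_ifs <;> assumption

variable [Fintype A]

lemma gval_peakRow_top (h2 : 1 < Fintype.card A) (hβα : β ≤ α) :
    gval (peakRow p α β) ⊤ = α + β := by
  obtain ⟨b, hb⟩ := Fintype.exists_ne_of_one_lt_card h2 p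
  refine IsGreatest.csSup_eq ⟨⟨p, b, hb.symm, by rw [peakRow_self, peakRow_of_ne hb]⟩, ?_⟩
  rintro r ⟨a, a', haa', rfl⟩
  exact peakRow_add_le hβα haa'

lemma gval_peakRow_top_le (h2 : 1 < Fintype.card A) (hβα : β ≤ α) (hα : α ≤ 0)
    (d : Dia A) :
    gval (peakRow p α β) ⊤ ≤ gval (peakRow p α β) d := by
  rw [gval_peakRow_top h2 hβα]
  cases d with
  | bot => simp only [bot_eq, gval_bot]; linarith
  | top => rw [top_eq, gval_peakRow_top h2 hβα]
  | atom a =>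
    by_cases ha : a = p
    · rw [ha, gval_atom, peakRow_self]; linarith
    · rw [gval_atom, peakRow_of_ne ha]; linarith

lemma gval_peakRow_supermod (h2 : 1 < Fintype.card A) (hβα : β ≤ α) (d d' : Dia A) :
    gval (peakRow p α β) d + gval (peakRow p α β) d' ≤
      gval (peakRow p α β) (d ⊓ d') + gval (peakRow p α β) (d ⊔ d') := by
  cases d <;> cases d' <;> simp only [bot_eq, top_eq, bot_inf_eq, inf_bot_eq, bot_sup_eq,
    sup_bot_eq, top_inf_eq, inf_top_eq, top_sup_eq, sup_top_eq, gval_bot, zero_add, add_zero,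
    add_comm, le_refl]
  case atom.atom a a' =>
    by_cases haa' : a = a'
    · rw [haa', inf_idem, sup_idem]
    · rw [atom_inf_atom haa', atom_sup_atom haa', gval_bot, gval_peakRow_top h2 hβα, gval_atom,
        gval_atom]
      linarith [peakRow_add_le (p := p) hβα haa']

lemma gval_peakRow_mem (h2 : 1 < Fintype.card A) (hβα : β ≤ α) {G : AddSubgroup ℝ}
    (hα : α ∈ G) (hβ : β ∈ G) (d : Dia A) : gval (peakRow p α β) d ∈ G := by
  cases d with
  | bot => exact G.zero_mem
  | top => rw [top_eq, gval_peakRow_top h2 hβα]; exact G.add_mem hα hβ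
  | atom a => exact peakRow_mem hα hβ a

end PeakRow

lemma _root_.UnifiedRow.exists_eq_peakRow [Fintype A] (h2 : 1 < Fintype.card A) {v : A → ℝ}
    (hv : UnifiedRow v) : ∃ p α β, β ≤ α ∧ v = peakRow p α β := by
  obtain ⟨p, hconst, hpeak⟩ := hv
  obtain ⟨b, hb⟩ := Fintype.exists_ne_of_one_lt_card h2 p
  refine ⟨p, v p, v b, hpeak b, funext fun a => ?_⟩
  by_cases ha : a = p
  · rw [ha, peakRow_self]
  · rw [peakRow_of_ne ha, hconst a b ha hb]

end Basic

section GreedyRow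

variable {A : Type} [Fintype A] [Nonempty A] (h : Dia A → ℝ)

noncomputable def maxAtom : A := (Finite.exists_max fun a => h (atom a)).choose

lemma le_maxAtom (a : A) : h (atom a) ≤ h (atom (maxAtom h)) :=
  (Finite.exists_max fun a => h (atom a)).choose_spec a

noncomputable def peakVal : ℝ := min 0 (h (atom (maxAtom h)))

lemma peakVal_le : peakVal h ≤ h (atom (maxAtom h)) := min_le_right _ _

variable [DecidableEq A]

noncomputable def baseVal : ℝ := min (min (peakVal h) (⨅ a, h (atom a))) (h ⊤ - peakVal h)

noncomputable def greedyRow : A → ℝ := peakRow (maxAtom h) (peakVal h) (baseVal h)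

lemma baseVal_le_peakVal : baseVal h ≤ peakVal h := (min_le_left _ _).trans (min_le_left _ _)

lemma baseVal_le_sub : baseVal h ≤ h ⊤ - peakVal h := min_le_right _ _

lemma unifiedRow_greedyRow : UnifiedRow (greedyRow h) :=
  unifiedRow_peakRow (baseVal_le_peakVal h)

lemma greedyRow_nonpos (a : A) : greedyRow h a ≤ 0 :=
  (peakRow_le (baseVal_le_peakVal h) a).trans (min_le_left _ _)

lemma gval_greedyRow_top (h2 : 1 < Fintype.card A) :
    gval (greedyRow h) ⊤ = peakVal h + baseVal h :=
  gval_peakRow_top h2 (baseVal_le_peakVal h)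

lemma gval_greedyRow_supermod (h2 : 1 < Fintype.card A) (d d' : Dia A) :
    gval (greedyRow h) d + gval (greedyRow h) d' ≤
      gval (greedyRow h) (d ⊓ d') + gval (greedyRow h) (d ⊔ d') :=
  gval_peakRow_supermod h2 (baseVal_le_peakVal h) d d'

lemma gval_greedyRow_le (h2 : 1 < Fintype.card A) (hbot : 0 ≤ h ⊥) (d : Dia A) :
    gval (greedyRow h) d ≤ h d := by
  cases d with
  | bot => simpa using hbot
  | top =>
    rw [top_eq, gval_greedyRow_top h h2]
    linarith [baseVal_le_sub h]
  | atom a =>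
    by_cases ha : a = maxAtom h
    · rw [ha, gval_atom, greedyRow, peakRow_self]
      exact peakVal_le h
    · rw [gval_atom, greedyRow, peakRow_of_ne ha]
      exact (min_le_left _ _).trans
        ((min_le_right _ _).trans (ciInf_le (Set.finite_range _).bddBelow a))

lemma top_le_add_maxAtom (h2 : 1 < Fintype.card A) (hbot : h ⊥ = 0)
    (hsub : ∀ d d', h (d ⊓ d') + h (d ⊔ d') ≤ h d + h d') (a : A) :
    h ⊤ ≤ h (atom a) + h (atom (maxAtom h)) := by
  have pair : ∀ a b, a ≠ b → h ⊤ ≤ h (atom a) + h (atom b) := fun a b hab => by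
    simpa [atom_inf_atom hab, atom_sup_atom hab, hbot] using hsub (atom a) (atom b)
  by_cases ha : a = maxAtom h
  · obtain ⟨b, hb⟩ := Fintype.exists_ne_of_one_lt_card h2 (maxAtom h)
    rw [ha]
    linarith [pair b _ hb, le_maxAtom h b]
  · exact pair a _ ha

lemma gval_greedyRow_add_le (h2 : 1 < Fintype.card A) {H : Dia A → ℝ} {m : ℝ}
    (hbot : h ⊥ = 0)
    (hsub : ∀ d d', h (d ⊓ d') + h (d ⊔ d') ≤ h d + h d')
    (hmix : ∀ d d', h (d ⊓ d') + H (d ⊔ d') ≤ h d + H d')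
    (hm : ∀ d, m ≤ H d) (d : Dia A) :
    gval (greedyRow h) d + (m - H d) ≤ gval (greedyRow h) ⊤ := by
  set p := maxAtom h
  have top_le_atom_add : ∀ a b, a ≠ b → H ⊤ ≤ h (atom a) + H (atom b) := fun a b hab => by
    simpa [atom_inf_atom hab, atom_sup_atom hab, hbot] using hmix (atom a) (atom b)
  have atom_add_top_le : ∀ a, h (atom a) + H ⊤ ≤ h ⊤ + H (atom a) := fun a => by
    simpa using hmix ⊤ (atom a)
  have atom_le_atom_add : ∀ a, H (atom a) ≤ h (atom a) + H ⊥ := fun a => by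
    simpa [hbot] using hmix (atom a) ⊥
  have top_le_top_add : H ⊤ ≤ h ⊤ + H ⊥ := by simpa [hbot] using hmix ⊤ ⊥
  have top_le_add_max := top_le_add_maxAtom h h2 hbot hsub
  have hα : (peakVal h = 0 ∧ 0 ≤ h (atom p)) ∨ (peakVal h = h (atom p) ∧ h (atom p) < 0) :=
    min_cases _ _
  rw [gval_greedyRow_top h h2]
  cases d with
  | top => simp only [top_eq, gval_greedyRow_top h h2]; linarith [hm ⊤]
  | atom a =>
    by_cases ha : a = p
    · rw [ha, gval_atom, greedyRow, peakRow_self]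
      suffices m - H (atom p) ≤ baseVal h by linarith
      refine le_min (le_min ?_ (le_ciInf fun x => ?_)) ?_
      · rcases hα with ⟨hα, -⟩ | ⟨hα, -⟩ <;>
          linarith [hm (atom p), top_le_add_max p, atom_add_top_le p, hm ⊤]
      · by_cases hx : x = p
        · rw [hx]; linarith [top_le_add_max p, atom_add_top_le p, hm ⊤]
        · linarith [top_le_atom_add x p hx, hm ⊤]
      · linarith [peakVal_le h, atom_add_top_le p, hm ⊤]
    · rw [gval_atom, greedyRow, peakRow_of_ne ha]
      suffices m - H (atom a) ≤ peakVal h by linarith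
      exact le_min (by linarith [hm (atom a)])
        (by linarith [top_le_atom_add p a (Ne.symm ha), hm ⊤])
  | bot =>
    simp only [bot_eq, gval_bot, zero_add]
    suffices m - H ⊥ - peakVal h ≤ baseVal h by linarith
    refine le_min (le_min ?_ (le_ciInf fun x => ?_)) (by linarith [top_le_top_add, hm ⊤])
    · rcases hα with ⟨hα, -⟩ | ⟨hα, -⟩ <;>
        linarith [top_le_top_add, top_le_add_max p, hm ⊤, hm ⊥]
    · rcases hα with ⟨hα, -⟩ | ⟨hα, -⟩ <;>
        linarith [atom_le_atom_add x, hm (atom x), top_le_top_add, top_le_add_max x, hm ⊤]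

section Mem

variable {h} {G : AddSubgroup ℝ} (hG : ∀ d, h d ∈ G)
include hG

omit [DecidableEq A] in
lemma peakVal_mem : peakVal h ∈ G := min_rec' (· ∈ G) G.zero_mem (hG _)

lemma baseVal_mem : baseVal h ∈ G := by
  have hinf : (⨅ a, h (atom a)) ∈ G := by
    obtain ⟨x, hx⟩ := exists_eq_ciInf_of_finite (f := fun a => h (atom a))
    exact hx ▸ hG _
  exact min_rec' (· ∈ G) (min_rec' (· ∈ G) (peakVal_mem hG) hinf)
    (G.sub_mem (hG ⊤) (peakVal_mem hG))

lemma greedyRow_mem (a : A) : greedyRow h a ∈ G :=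
  peakRow_mem (peakVal_mem hG) (baseVal_mem hG) a

lemma gval_greedyRow_mem (h2 : 1 < Fintype.card A) (d : Dia A) : gval (greedyRow h) d ∈ G :=
  gval_peakRow_mem h2 (baseVal_le_peakVal h) (peakVal_mem hG) (baseVal_mem hG) d

end Mem

end GreedyRow

end Dia

lemma Fin.cons_inf_cons {α : Type*} [Min α] {n : ℕ} (a b : α) (x y : Fin n → α) :
    (Fin.cons a x ⊓ Fin.cons b y : Fin (n + 1) → α) = Fin.cons (a ⊓ b) (x ⊓ y) := by
  ext i; cases i using Fin.cases <;> rfl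

lemma Fin.cons_sup_cons {α : Type*} [Max α] {n : ℕ} (a b : α) (x y : Fin n → α) :
    (Fin.cons a x ⊔ Fin.cons b y : Fin (n + 1) → α) = Fin.cons (a ⊔ b) (x ⊔ y) := by
  ext i; cases i using Fin.cases <;> rfl

lemma Fin.cons_bot {α : Type*} [Bot α] {n : ℕ} :
    (Fin.cons ⊥ ⊥ : Fin (n + 1) → α) = ⊥ := by
  ext i; cases i using Fin.cases <;> rfl

section Reduction

variable {A : Type} [DecidableEq A] {n : ℕ}

omit [DecidableEq A] in
lemma evalD_cons (v : A → ℝ) (z : Fin n → A → ℝ) (y : Fin (n + 1) → Dia A) :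
    evalD (Fin.cons v z : Fin (n + 1) → A → ℝ) y =
      Dia.gval v (y 0) + evalD z (Fin.tail y) := by
  simp [evalD, Fin.sum_univ_succ, Fin.tail]

lemma evalD_top_le_of_inP [Fintype A] (h2 : 1 < Fintype.card A) {f : (Fin n → Dia A) → ℝ}
    {w : Fin n → A → ℝ} (hP : InP f w) (hneg : ∀ i a, w i a ≤ 0) (hw : Unified w)
    (y : Fin n → Dia A) : evalD w ⊤ ≤ f y := by
  refine le_trans (Finset.sum_le_sum fun i _ => ?_) (hP y)
  obtain ⟨p, α, β, hβα, hwi⟩ := (hw i).exists_eq_peakRow h2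
  rw [hwi]
  exact Dia.gval_peakRow_top_le h2 hβα (by simpa [hwi] using hneg i p) (y i)

variable [Fintype A] [Nonempty A]

noncomputable abbrev firstRow (f : (Fin (n + 1) → Dia A) → ℝ) : A → ℝ :=
  Dia.greedyRow fun d => f (Fin.cons d ⊥)

noncomputable def contractFirst (f : (Fin (n + 1) → Dia A) → ℝ) (y : Fin n → Dia A) : ℝ :=
  ⨅ d, f (Fin.cons d y) - Dia.gval (firstRow f) d

variable {f : (Fin (n + 1) → Dia A) → ℝ}

lemma contractFirst_le (d : Dia A) (y : Fin n → Dia A) :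
    contractFirst f y ≤ f (Fin.cons d y) - Dia.gval (firstRow f) d :=
  ciInf_le (Set.finite_range _).bddBelow d

lemma exists_contractFirst_eq (y : Fin n → Dia A) :
    ∃ d, f (Fin.cons d y) - Dia.gval (firstRow f) d = contractFirst f y :=
  exists_eq_ciInf_of_finite

lemma submod_contractFirst (h2 : 1 < Fintype.card A) (hf : Submod f) :
    Submod (contractFirst f) := by
  intro y y'
  obtain ⟨d, hd⟩ := exists_contractFirst_eq (f := f) y
  obtain ⟨d', hd'⟩ := exists_contractFirst_eq (f := f) y'
  have hsub := hf (Fin.cons d y) (Fin.cons d' y')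
  rw [Fin.cons_inf_cons, Fin.cons_sup_cons] at hsub
  linarith [contractFirst_le (f := f) (d ⊓ d') (y ⊓ y'),
    contractFirst_le (f := f) (d ⊔ d') (y ⊔ y'),
    Dia.gval_greedyRow_supermod (fun d => f (Fin.cons d ⊥)) h2 d d']

lemma contractFirst_bot (h2 : 1 < Fintype.card A) (h0 : f ⊥ = 0) : contractFirst f ⊥ = 0 := by
  refine le_antisymm ?_ (le_ciInf fun d => sub_nonneg.2 ?_)
  · simpa [Fin.cons_bot, h0] using contractFirst_le (f := f) ⊥ ⊥
  · exact Dia.gval_greedyRow_le _ h2 (by simp [Fin.cons_bot, h0]) d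

lemma sub_le_contractFirst (h2 : 1 < Fintype.card A) (hf : Submod f) (h0 : f ⊥ = 0) {m : ℝ}
    (hm : ∀ x, m ≤ f x) (y : Fin n → Dia A) :
    m - Dia.gval (firstRow f) ⊤ ≤ contractFirst f y := by
  have hbot : f (Fin.cons ⊥ ⊥) = 0 := by rw [Fin.cons_bot, h0]
  have hsub (d d' : Dia A) := hf (Fin.cons d ⊥) (Fin.cons d' ⊥)
  have hmix (d d' : Dia A) := hf (Fin.cons d ⊥) (Fin.cons d' y)
  simp only [Fin.cons_inf_cons, Fin.cons_sup_cons, inf_idem, sup_idem, bot_inf_eq,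
    bot_sup_eq] at hsub hmix
  refine le_ciInf fun d => ?_
  linarith [Dia.gval_greedyRow_add_le (fun d => f (Fin.cons d ⊥)) h2
    (H := fun d => f (Fin.cons d y)) hbot hsub hmix (fun d => hm _) d]

lemma contractFirst_mem (h2 : 1 < Fintype.card A) {G : AddSubgroup ℝ} (hG : ∀ x, f x ∈ G)
    (y : Fin n → Dia A) : contractFirst f y ∈ G := by
  obtain ⟨d, hd⟩ := exists_contractFirst_eq (f := f) y
  exact hd ▸ G.sub_mem (hG _) (Dia.gval_greedyRow_mem (fun _ => hG _) h2 d)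

end Reduction

section DualVector

variable {A : Type} [DecidableEq A] [Fintype A] [Nonempty A]

noncomputable def dualVector : (n : ℕ) → ((Fin n → Dia A) → ℝ) → Fin n → A → ℝ
  | 0, _ => 0
  | n + 1, f => Fin.cons (firstRow f) (dualVector n (contractFirst f))

lemma unified_dualVector (n : ℕ) (f : (Fin n → Dia A) → ℝ) : Unified (dualVector n f) := by
  induction n with
  | zero => exact fun i => i.elim0
  | succ n ih =>
    intro i
    cases i using Fin.cases
    · exact Dia.unifiedRow_greedyRow _
    · exact ih _ _

lemma dualVector_nonpos (n : ℕ) (f : (Fin n → Dia A) → ℝ) (i : Fin n) (a : A) :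
    dualVector n f i a ≤ 0 := by
  induction n with
  | zero => exact i.elim0
  | succ n ih =>
    cases i using Fin.cases
    · exact Dia.greedyRow_nonpos _ a
    · exact ih _ _

lemma dualVector_mem {G : AddSubgroup ℝ} (h2 : 1 < Fintype.card A) (n : ℕ)
    (f : (Fin n → Dia A) → ℝ) (hG : ∀ x, f x ∈ G) (i : Fin n) (a : A) :
    dualVector n f i a ∈ G := by
  induction n with
  | zero => exact i.elim0
  | succ n ih =>
    cases i using Fin.cases
    · exact Dia.greedyRow_mem (fun _ => hG _) a
    · exact ih _ (contractFirst_mem h2 hG) _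

lemma inP_dualVector (h2 : 1 < Fintype.card A) (n : ℕ) (f : (Fin n → Dia A) → ℝ)
    (h0 : f ⊥ = 0) : InP f (dualVector n f) := by
  induction n with
  | zero =>
    intro y
    rw [Subsingleton.elim y ⊥, h0]
    simp [evalD]
  | succ n ih =>
    intro y
    have hrest := ih (contractFirst f) (contractFirst_bot h2 h0) (Fin.tail y)
    have hfirst := contractFirst_le (f := f) (y 0) (Fin.tail y)
    rw [Fin.cons_self_tail] at hfirst
    rw [dualVector, evalD_cons]
    linarith

lemma le_evalD_dualVector (h2 : 1 < Fintype.card A) (n : ℕ) (f : (Fin n → Dia A) → ℝ)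
    (hf : Submod f) (h0 : f ⊥ = 0) {m : ℝ} (hm : ∀ x, m ≤ f x) :
    m ≤ evalD (dualVector n f) ⊤ := by
  induction n generalizing m with
  | zero => simpa [evalD, h0] using hm ⊥
  | succ n ih =>
    have := ih (contractFirst f) (submod_contractFirst h2 hf) (contractFirst_bot h2 h0)
      (sub_le_contractFirst h2 hf h0 hm)
    rw [dualVector, evalD_cons]
    change m ≤ Dia.gval (firstRow f) ⊤ + evalD _ ⊤
    linarith

end DualVector

theorem stmt4_general [Fintype A] (hA : 3 ≤ Fintype.card A)
    (f : (Fin n → Dia A) → ℝ) (hf : Submod f)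
    (h0 : f (fun _ => Dia.bot) = 0) :
    ∃ m : ℝ, IsLeast (Set.range f) m ∧
      IsGreatest {r : ℝ | ∃ z : Fin n → A → ℝ, InP f z ∧ (∀ i a, z i a ≤ 0) ∧
        Unified z ∧ r = evalD z (fun _ => Dia.top)} m ∧
      ((∀ t, ∃ k : ℤ, f t = (k : ℝ)) →
        ∃ z : Fin n → A → ℝ, InP f z ∧ (∀ i a, z i a ≤ 0) ∧ Unified z ∧
          evalD z (fun _ => Dia.top) = m ∧ ∀ i a, ∃ k : ℤ, z i a = (k : ℝ)) := by
  have h2 : 1 < Fintype.card A := by omega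
  have : Nonempty A := Fintype.card_pos_iff.mp (by omega)
  set z := dualVector n f
  have hzP : InP f z := inP_dualVector h2 n f h0
  obtain ⟨x₀, hx₀⟩ := Finite.exists_min f
  have hz : evalD z ⊤ = f x₀ :=
    le_antisymm (evalD_top_le_of_inP h2 hzP (dualVector_nonpos n f) (unified_dualVector n f) x₀)
      (le_evalD_dualVector h2 n f hf h0 hx₀)
  refine ⟨f x₀, ⟨⟨x₀, rfl⟩, fun _ ⟨x, hx⟩ => hx ▸ hx₀ x⟩, ⟨⟨z, hzP, dualVector_nonpos n f,
    unified_dualVector n f, hz.symm⟩, ?_⟩, fun hint => ?_⟩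
  · rintro r ⟨w, hwP, hneg, hU, rfl⟩
    exact evalD_top_le_of_inP h2 hwP hneg hU x₀
  · refine ⟨z, hzP, dualVector_nonpos n f, unified_dualVector n f, hz, fun i a => ?_⟩
    have hmem := dualVector_mem (G := (Int.castAddHom ℝ).range) h2 n f
      (fun x => (hint x).imp fun _ hk => hk.symm) i a
    exact hmem.imp fun _ hk => hk.symm

/-- the min--max theorem for submodular functions over diamonds. -/
theorem stmt4 [Fintype A] (hA : 3 ≤ Fintype.card A) (hn : 0 < n)
    (f : (Fin n → Dia A) → ℝ) (hf : Submod f)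
    (h0 : f (fun _ => Dia.bot) = 0) :
    ∃ m : ℝ, IsLeast (Set.range f) m ∧
      IsGreatest {r : ℝ | ∃ z : Fin n → A → ℝ, InP f z ∧ (∀ i a, z i a ≤ 0) ∧
        Unified z ∧ r = evalD z (fun _ => Dia.top)} m ∧
      ((∀ t, ∃ k : ℤ, f t = (k : ℝ)) →
        ∃ z : Fin n → A → ℝ, InP f z ∧ (∀ i a, z i a ≤ 0) ∧ Unified z ∧
          evalD z (fun _ => Dia.top) = m ∧ ∀ i a, ∃ k : ℤ, z i a = (k : ℝ)) :=
  stmt4_general hA f hf h0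
end

section
/- Let f : M^n → ℤ be submodular on a diamond M and define f'(t) = (n² + 1)·f(t) + ρ(t)(2n − ρ(t)). Then f' is strictly submodular, and every minimizer of f' is a minimizer of f. -/
set_option linter.unreachableTactic false
set_option linter.unusedTactic false
set_option linter.unusedVariables false

variable {A : Type} [DecidableEq A] {n : ℕ}

/-- Integer-valued rank of a tuple in M^n. -/
def rkZ (t : Fin n → Dia A) : ℤ := ∑ i, (Dia.drank (t i) : ℤ)

/-! The rank function ρ of `M^n` is modular and strictly monotone, so for incomparable `t, u` the
ranks `s = ρ(t ⊓ u) < a = ρ t, b = ρ u` satisfy `ρ(t ⊔ u) = a + b - s`, and the concave term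
`ρ(2n - ρ)` loses exactly `2 (a - s)(b - s) > 0` in passing from `t, u` to `t ⊓ u, t ⊔ u`.
This makes `f'` strictly submodular. Since `0 ≤ ρ(2n - ρ) ≤ n² < n² + 1`, the perturbation
cannot compensate a difference of `1` in the integer values of `f`, so minimizers of `f'`
minimize `f`. -/

section RankBounds

omit [DecidableEq A]

lemma Dia.drank_le_two (x : Dia A) : x.drank ≤ 2 := by
  cases x <;> simp [Dia.drank]

lemma rkZ_nonneg (t : Fin n → Dia A) : 0 ≤ rkZ t :=
  Finset.sum_nonneg fun _ _ => Int.natCast_nonneg _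

lemma rkZ_le (t : Fin n → Dia A) : rkZ t ≤ 2 * n := by
  calc rkZ t ≤ ∑ _i : Fin n, (2 : ℤ) :=
        Finset.sum_le_sum fun i _ => by exact_mod_cast (t i).drank_le_two
    _ = 2 * n := by simp [mul_comm]

lemma rkZ_perturbation_nonneg (t : Fin n → Dia A) : 0 ≤ rkZ t * (2 * n - rkZ t) :=
  mul_nonneg (rkZ_nonneg t) (by linarith [rkZ_le t])

lemma rkZ_perturbation_le_sq (t : Fin n → Dia A) : rkZ t * (2 * n - rkZ t) ≤ (n : ℤ) ^ 2 := by
  nlinarith [sq_nonneg (rkZ t - n)]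

end RankBounds

namespace Dia

lemma drank_strictMono : StrictMono (drank : Dia A → ℕ) := by
  rintro x y ⟨hle, hne⟩
  rcases hle with rfl | rfl | rfl
  · cases y <;> simp_all [drank]
  · cases x <;> simp_all [drank]
  · exact (hne (le_refl x)).elim

lemma drank_inf_add_drank_sup (a b : Dia A) :
    drank (a ⊓ b) + drank (a ⊔ b) = drank a + drank b := by
  rcases a with _ | a | _ <;> rcases b with _ | b | _ <;> try rfl
  by_cases hab : a = b
  · subst hab
    simp
  · have hinf : atom a ⊓ atom b = bot := show ite _ _ _ = _ by simp [hab]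
    have hsup : atom a ⊔ atom b = top := show ite _ _ _ = _ by simp [hab]
    rw [hinf, hsup]
    rfl

end Dia

lemma rkZ_inf_add_rkZ_sup (t u : Fin n → Dia A) :
    rkZ (t ⊓ u) + rkZ (t ⊔ u) = rkZ t + rkZ u := by
  simp only [rkZ, ← Finset.sum_add_distrib, Pi.inf_apply, Pi.sup_apply]
  exact Finset.sum_congr rfl fun i _ => by exact_mod_cast Dia.drank_inf_add_drank_sup (t i) (u i)

lemma rkZ_strictMono : StrictMono (rkZ : (Fin n → Dia A) → ℤ) := by
  intro t u htu
  obtain ⟨hle, i, hi⟩ := Pi.lt_def.mp htu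
  exact Finset.sum_lt_sum (fun j _ => by exact_mod_cast Dia.drank_strictMono.monotone (hle j))
    ⟨i, Finset.mem_univ i, by exact_mod_cast Dia.drank_strictMono hi⟩

lemma concave_gap (m s a b : ℤ) :
    s * (m - s) + (a + b - s) * (m - (a + b - s)) + 2 * ((a - s) * (b - s)) =
      a * (m - a) + b * (m - b) := by
  ring

lemma rkZ_perturbation_strict_submod {t u : Fin n → Dia A} (htu : ¬ t ≤ u) (hut : ¬ u ≤ t) :
    rkZ (t ⊓ u) * (2 * n - rkZ (t ⊓ u)) + rkZ (t ⊔ u) * (2 * n - rkZ (t ⊔ u)) <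
      rkZ t * (2 * n - rkZ t) + rkZ u * (2 * n - rkZ u) := by
  have hs_t : rkZ (t ⊓ u) < rkZ t := rkZ_strictMono (inf_lt_left.mpr htu)
  have hs_u : rkZ (t ⊓ u) < rkZ u := rkZ_strictMono (inf_lt_right.mpr hut)
  have hsup : rkZ (t ⊔ u) = rkZ t + rkZ u - rkZ (t ⊓ u) := by
    linarith [rkZ_inf_add_rkZ_sup t u]
  have hgap : 0 < (rkZ t - rkZ (t ⊓ u)) * (rkZ u - rkZ (t ⊓ u)) :=
    mul_pos (by linarith) (by linarith)
  rw [hsup, ← concave_gap]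
  linarith

lemma le_of_mul_add_le_mul_add {c x y p q : ℤ} (h : c * x + p ≤ c * y + q) (hc : 0 < c)
    (hp : 0 ≤ p) (hq : q < c) : x ≤ y := by
  by_contra! hxy
  nlinarith [mul_le_mul_of_nonneg_left (Int.add_one_le_iff.mpr hxy) hc.le]

theorem stmt12_general
    (f : (Fin n → Dia A) → ℤ)
    (hf : ∀ a b : Fin n → Dia A, f (a ⊓ b) + f (a ⊔ b) ≤ f a + f b)
    (f' : (Fin n → Dia A) → ℤ)
    (hf' : ∀ t, f' t = ((n : ℤ) ^ 2 + 1) * f t + rkZ t * (2 * n - rkZ t)) :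
    (∀ t u : Fin n → Dia A, ¬ t ≤ u → ¬ u ≤ t →
        f' (t ⊓ u) + f' (t ⊔ u) < f' t + f' u) ∧
    (∀ t : Fin n → Dia A, (∀ u, f' t ≤ f' u) → ∀ u, f t ≤ f u) := by
  have hc : (0 : ℤ) < (n : ℤ) ^ 2 + 1 := by positivity
  refine ⟨fun t u htu hut => ?_, fun t hmin u => ?_⟩
  · simp only [hf']
    linarith [mul_le_mul_of_nonneg_left (hf t u) hc.le, rkZ_perturbation_strict_submod htu hut]
  · have hle := hmin u
    rw [hf', hf'] at hle
    exact le_of_mul_add_le_mul_add hle hc (rkZ_perturbation_nonneg t)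
      (by linarith [rkZ_perturbation_le_sq u])

/-- f'(t) = (n²+1)·f(t) + ρ(t)(2n − ρ(t)) is strictly submodular
and every minimizer of f' minimizes f. -/
theorem stmt12 [Fintype A] (hA : 3 ≤ Fintype.card A)
    (f : (Fin n → Dia A) → ℤ)
    (hf : ∀ a b : Fin n → Dia A, f (a ⊓ b) + f (a ⊔ b) ≤ f a + f b)
    (f' : (Fin n → Dia A) → ℤ)
    (hf' : ∀ t, f' t = ((n : ℤ) ^ 2 + 1) * f t + rkZ t * (2 * n - rkZ t)) :
    (∀ t u : Fin n → Dia A, ¬ t ≤ u → ¬ u ≤ t →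
        f' (t ⊓ u) + f' (t ⊔ u) < f' t + f' u) ∧
    (∀ t : Fin n → Dia A, (∀ u, f' t ≤ f' u) → ∀ u, f t ≤ f u) :=
  stmt12_general f hf f' hf'
end

section
/- Let M be a diamond with atoms A, f : M^n → ℝ submodular, a, b ∈ M^n with a ≤ b, and let J = { j ∈ [n] : a(j) ≠ b(j), and not (a(j) = 0 and b(j) = 1) }. Fix z ∈ M^n with z(i) = 0 for all i outside I = { i : a(i) = 0, b(i) = 1 }. For Y = {y_1,...,y_m} ⊆ J define g_z(Y) = f( a[y_1 = b(y_1), ..., y_m = b(y_m)] ⊔ z ). Then g_z is a submodular set function on 2^J: g_z(C) + g_z(D) ≥ g_z(C ∩ D) + g_z(C ∪ D) for all C, D ⊆ J. -/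
set_option linter.unreachableTactic false
set_option linter.unusedTactic false
set_option linter.unusedVariables false

variable {A : Type} [DecidableEq A] {n : ℕ}

/-- The tuple obtained from `a` by replacing the coordinates in `Y` by the
corresponding values of `b`, joined with `z`. -/
def tupOf (a b z : Fin n → Dia A) (Y : Finset (Fin n)) : Fin n → Dia A :=
  (fun j => if j ∈ Y then b j else a j) ⊔ z


/-! Each coordinate of `tupOf a b z Y` lies in the chain `a j ⊔ z j ≤ b j ⊔ z j`, so
`Y ↦ tupOf a b z Y` sends `∩` and `∪` to `⊓` and `⊔`, and submodularity of `f` transfers to the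
set function. -/

section IteSup

variable {α : Type*} [Lattice α] {a b : α}

theorem ite_and_sup_eq_inf (hab : a ≤ b) (p q : Prop) [Decidable p] [Decidable q] (z : α) :
    (if p ∧ q then b else a) ⊔ z = ((if p then b else a) ⊔ z) ⊓ ((if q then b else a) ⊔ z) := by
  have h : a ⊔ z ≤ b ⊔ z := sup_le_sup_right hab z
  by_cases hp : p <;> by_cases hq : q <;> simp [hp, hq, h]

theorem ite_or_sup_eq_sup (hab : a ≤ b) (p q : Prop) [Decidable p] [Decidable q] (z : α) :
    (if p ∨ q then b else a) ⊔ z = ((if p then b else a) ⊔ z) ⊔ ((if q then b else a) ⊔ z) := by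
  have h : a ⊔ z ≤ b ⊔ z := sup_le_sup_right hab z
  by_cases hp : p <;> by_cases hq : q <;> simp [hp, hq, h]

end IteSup

theorem tupOf_inter {a b : Fin n → Dia A} (hab : a ≤ b) (z : Fin n → Dia A)
    (C D : Finset (Fin n)) : tupOf a b z (C ∩ D) = tupOf a b z C ⊓ tupOf a b z D := by
  funext j
  simpa only [tupOf, Finset.mem_inter, Pi.sup_apply, Pi.inf_apply] using
    ite_and_sup_eq_inf (hab j) (j ∈ C) (j ∈ D) (z j)

theorem tupOf_union {a b : Fin n → Dia A} (hab : a ≤ b) (z : Fin n → Dia A)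
    (C D : Finset (Fin n)) : tupOf a b z (C ∪ D) = tupOf a b z C ⊔ tupOf a b z D := by
  funext j
  simpa only [tupOf, Finset.mem_union, Pi.sup_apply] using
    ite_or_sup_eq_sup (hab j) (j ∈ C) (j ∈ D) (z j)

theorem stmt15_general
    (f : (Fin n → Dia A) → ℝ) (hf : Submod f)
    (a b : Fin n → Dia A) (hab : a ≤ b)
    (z : Fin n → Dia A)
    (C D : Finset (Fin n)) :
    f (tupOf a b z (C ∩ D)) + f (tupOf a b z (C ∪ D)) ≤
      f (tupOf a b z C) + f (tupOf a b z D) := by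
  rw [tupOf_inter hab, tupOf_union hab]
  exact hf _ _

/-- g_z(Y) = f(a[Y := b] ⊔ z) is a submodular set function. -/
theorem stmt15 [Fintype A] (hA : 3 ≤ Fintype.card A)
    (f : (Fin n → Dia A) → ℝ) (hf : Submod f)
    (a b : Fin n → Dia A) (hab : a ≤ b)
    (z : Fin n → Dia A)
    (hz : ∀ i : Fin n, ¬(a i = Dia.bot ∧ b i = Dia.top) → z i = Dia.bot)
    (C D : Finset (Fin n))
    (hC : ∀ j ∈ C, a j ≠ b j ∧ ¬(a j = Dia.bot ∧ b j = Dia.top))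
    (hD : ∀ j ∈ D, a j ≠ b j ∧ ¬(a j = Dia.bot ∧ b j = Dia.top)) :
    f (tupOf a b z (C ∩ D)) + f (tupOf a b z (C ∪ D)) ≤
      f (tupOf a b z C) + f (tupOf a b z D) :=
  stmt15_general f hf a b hab z C D
end

section
/- Half-integrality inverse lemma: Let A be an m × n integer matrix such that every column j satisfies Σ_{i=1}^m |A_{ij}| ≤ 2. Then for every square non-singular submatrix S of A, the inverse S⁻¹ is half-integral (every entry of S⁻¹ lies in (1/2)ℤ). -/
/-!
We prove more: if `A` is a nonsingular integer matrix whose columns have absolute sums at most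
two, then every rational `x` with `A x` integral is half-integral, and `x j` is even integral
when column `j` has absolute sum at most one. Applied to the columns of `S⁻¹` this is the theorem.

The proof is by induction on the size. If some column `j` has a single nonzero entry `a`, in
row `i`, delete row `i` and column `j`. Every other nonzero entry of row `i` sits in a column
whose remainder has absolute sum at most one, so by the strengthened hypothesis the rest of
row `i` of `A x` is integral, hence so is `a * x j` with `|a| ≤ 2`. Otherwise every column
consists of two entries `±1`, and counting shows that some row has absolute sum at most two.
If that row has a single entry `±1`, then `x j` is integral and we delete again; if it has two,
a unimodular column operation clears one of them without breaking the column bound.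
-/

open Matrix Finset

theorem Fintype.sum_comp_le_sum_of_injective {ι κ M : Type*} [Fintype ι] [Fintype κ]
    [AddCommMonoid M] [PartialOrder M] [IsOrderedAddMonoid M] {e : ι → κ}
    (he : Function.Injective e) {f : κ → M} (hf : ∀ k, 0 ≤ f k) :
    ∑ i, f (e i) ≤ ∑ k, f k := by
  simpa using sum_le_univ_sum_of_nonneg (s := univ.map ⟨e, he⟩) hf

theorem mem_bot_of_intCast_mul_mem_bot {a : ℤ} {q : ℚ} (ha : |a| = 1)
    (h : (a : ℚ) * q ∈ (⊥ : Subring ℚ)) : q ∈ (⊥ : Subring ℚ) := by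
  have haa : a * a = 1 := by rw [← abs_mul_abs_self, ha, one_mul]
  have hq : q = a * (a * q) := by rw [← mul_assoc, ← Int.cast_mul, haa, Int.cast_one, one_mul]
  rw [hq]
  exact mul_mem (intCast_mem _ _) h

theorem two_mul_mem_bot_of_intCast_mul_mem_bot {a : ℤ} {q : ℚ} (ha₀ : a ≠ 0) (ha : |a| ≤ 2)
    (h : (a : ℚ) * q ∈ (⊥ : Subring ℚ)) : 2 * q ∈ (⊥ : Subring ℚ) := by
  rcases (by have := abs_pos.2 ha₀; omega : |a| = 1 ∨ |a| = 2) with ha₁ | ha₂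
  · exact mul_mem (intCast_mem _ 2) (mem_bot_of_intCast_mul_mem_bot ha₁ h)
  · rcases (abs_eq zero_le_two).1 ha₂ with rfl | rfl
    · exact_mod_cast h
    · simpa using neg_mem h

namespace Matrix

theorem sum_abs_submatrix_le {l m n o : Type*} [Fintype l] [Fintype m] (A : Matrix m n ℤ)
    {r : l → m} (hr : Function.Injective r) (c : o → n) (j : o) :
    ∑ i, |A.submatrix r c i j| ≤ ∑ i, |A i (c j)| :=
  Fintype.sum_comp_le_sum_of_injective hr (f := fun i => |A i (c j)|) fun _ => abs_nonneg _

theorem map_transvection {n R S : Type*} [Fintype n] [DecidableEq n] [CommRing R] [CommRing S]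
    (f : R →+* S) (i j : n) (c : R) :
    (transvection i j c).map f = transvection i j (f c) := by
  rw [transvection, transvection, ← RingHom.mapMatrix_apply, _root_.map_add, _root_.map_one,
    RingHom.mapMatrix_apply, map_single]

section succAbove

variable {R : Type*} [CommRing R] {k : ℕ}

theorem det_succ_row_single (A : Matrix (Fin (k + 1)) (Fin (k + 1)) R) (i₀ j₀ : Fin (k + 1))
    (h : ∀ j, j ≠ j₀ → A i₀ j = 0) :
    A.det = (-1) ^ (i₀ + j₀ : ℕ) * A i₀ j₀ * (A.submatrix i₀.succAbove j₀.succAbove).det := by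
  rw [det_succ_row A i₀, sum_eq_single j₀ (fun j _ hj => by rw [h j hj]; ring) (by simp)]

theorem det_succ_column_single (A : Matrix (Fin (k + 1)) (Fin (k + 1)) R) (i₀ j₀ : Fin (k + 1))
    (h : ∀ i, i ≠ i₀ → A i j₀ = 0) :
    A.det = (-1) ^ (i₀ + j₀ : ℕ) * A i₀ j₀ * (A.submatrix i₀.succAbove j₀.succAbove).det := by
  rw [det_succ_column A j₀, sum_eq_single i₀ (fun i _ hi => by rw [h i hi]; ring) (by simp)]

theorem submatrix_succAbove_mulVec (A : Matrix (Fin (k + 1)) (Fin (k + 1)) R)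
    (x : Fin (k + 1) → R) (i₀ j₀ : Fin (k + 1)) (i : Fin k) :
    (A.submatrix i₀.succAbove j₀.succAbove *ᵥ (x ∘ j₀.succAbove)) i =
      (A *ᵥ x) (i₀.succAbove i) - A (i₀.succAbove i) j₀ * x j₀ := by
  simp only [mulVec, dotProduct, Fin.sum_univ_succAbove _ j₀, submatrix_apply,
    Function.comp_apply]
  ring

theorem sum_abs_mul_transvection_le [LinearOrder R] [IsStrictOrderedRing R]
    (A : Matrix (Fin (k + 1)) (Fin (k + 1)) R) (i₀ : Fin (k + 1))
    {j₁ j₂ : Fin (k + 1)} {d : R} (hd : |d| ≤ 1) (hpivot : (A * transvection j₁ j₂ d) i₀ j₂ = 0) :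
    ∑ i, |(A * transvection j₁ j₂ d) i j₂| + |A i₀ j₂| + |A i₀ j₁| ≤
      ∑ i, |A i j₂| + ∑ i, |A i j₁| := by
  have hterm : ∀ i, |(A * transvection j₁ j₂ d) i j₂| ≤ |A i j₂| + |A i j₁| := fun i => by
    rw [mul_transvection_apply_same]
    calc |A i j₂ + d * A i j₁| ≤ |A i j₂| + |d| * |A i j₁| := by
          rw [← abs_mul]; exact abs_add_le ..
      _ ≤ |A i j₂| + |A i j₁| := by gcongr; exact mul_le_of_le_one_left (abs_nonneg _) hd
  rw [Fin.sum_univ_succAbove _ i₀, hpivot, abs_zero, zero_add, Fin.sum_univ_succAbove _ i₀,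
    Fin.sum_univ_succAbove (fun i => |A i j₁|) i₀]
  have := sum_le_sum fun i (_ : i ∈ univ) => hterm (i₀.succAbove i)
  rw [sum_add_distrib] at this
  linarith

end succAbove

theorem two_mul_intCast_mulVec_mem_bot {m n : Type*} [Fintype n] (B : Matrix m n ℤ)
    {y : n → ℚ} (hy : ∀ j, 2 * y j ∈ (⊥ : Subring ℚ)) (i : m) :
    2 * (B.map ((↑) : ℤ → ℚ) *ᵥ y) i ∈ (⊥ : Subring ℚ) := by
  rw [mulVec, dotProduct, mul_sum]
  exact sum_mem fun j _ => by rw [mul_left_comm]; exact mul_mem (intCast_mem _ _) (hy j)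

/-- The integrality clause is what makes the induction go through: when a column has a single
nonzero entry, it makes the rest of that entry's row integral. -/
def SolutionsHalfIntegral {k : ℕ} (A : Matrix (Fin k) (Fin k) ℤ) : Prop :=
  ∀ x : Fin k → ℚ, (∀ i, (A.map ((↑) : ℤ → ℚ) *ᵥ x) i ∈ (⊥ : Subring ℚ)) →
    ∀ j, 2 * x j ∈ (⊥ : Subring ℚ) ∧ (∑ i, |A i j| ≤ 1 → x j ∈ (⊥ : Subring ℚ))

variable {k : ℕ}

theorem solutionsHalfIntegral_of_column_single
    (IH : ∀ B : Matrix (Fin k) (Fin k) ℤ, (∀ j, ∑ i, |B i j| ≤ 2) → B.det ≠ 0 →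
      B.SolutionsHalfIntegral)
    (A : Matrix (Fin (k + 1)) (Fin (k + 1)) ℤ) (hcol : ∀ j, ∑ i, |A i j| ≤ 2) (hdet : A.det ≠ 0)
    {i₀ j₀ : Fin (k + 1)} (hzero : ∀ i, i ≠ i₀ → A i j₀ = 0) : A.SolutionsHalfIntegral := by
  intro x hx
  set B := A.submatrix i₀.succAbove j₀.succAbove
  have hdetA := det_succ_column_single A i₀ j₀ hzero
  have ha : A i₀ j₀ ≠ 0 := fun h => hdet (by rw [hdetA, h]; ring)
  have hB : B.det ≠ 0 := fun h => hdet (by rw [hdetA, h]; ring)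
  have hy : ∀ i, (B.map ((↑) : ℤ → ℚ) *ᵥ (x ∘ j₀.succAbove)) i ∈ (⊥ : Subring ℚ) := by
    intro i
    rw [← submatrix_map, submatrix_succAbove_mulVec]
    simpa [hzero _ (Fin.succAbove_ne i₀ i)] using hx (i₀.succAbove i)
  have hsub := sum_abs_submatrix_le A (Fin.succAbove_right_injective (p := i₀)) j₀.succAbove
  have hsol := IH B (fun j => (hsub j).trans (hcol _)) hB _ hy
  have hpivot : (A i₀ j₀ : ℚ) * x j₀ ∈ (⊥ : Subring ℚ) := by
    have hrow := hx i₀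
    rw [mulVec, dotProduct, Fin.sum_univ_succAbove _ j₀] at hrow
    refine (add_mem_cancel_right (sum_mem fun j _ => ?_)).1 hrow
    by_cases h : A i₀ (j₀.succAbove j) = 0
    · simp [h]
    · have hsplit := Fin.sum_univ_succAbove (fun i => |A i (j₀.succAbove j)|) i₀
      have := hcol (j₀.succAbove j)
      have := Int.one_le_abs h
      exact mul_mem (intCast_mem _ _) ((hsol j).2 (by simp only [B, submatrix_apply]; omega))
  have habs : |A i₀ j₀| ≤ ∑ i, |A i j₀| :=
    single_le_sum (f := fun i => |A i j₀|) (fun _ _ => abs_nonneg _) (mem_univ i₀)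
  refine Fin.succAboveCases j₀ ⟨two_mul_mem_bot_of_intCast_mul_mem_bot ha
    (habs.trans (hcol j₀)) hpivot, fun h => mem_bot_of_intCast_mul_mem_bot ?_ hpivot⟩
    fun j => ⟨(hsol j).1, fun h => (hsol j).2 ((hsub j).trans h)⟩
  have := abs_pos.2 ha
  omega

theorem solutionsHalfIntegral_of_row_single
    (IH : ∀ B : Matrix (Fin k) (Fin k) ℤ, (∀ j, ∑ i, |B i j| ≤ 2) → B.det ≠ 0 →
      B.SolutionsHalfIntegral)
    (A : Matrix (Fin (k + 1)) (Fin (k + 1)) ℤ) (hcol : ∀ j, ∑ i, |A i j| ≤ 2) (hdet : A.det ≠ 0)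
    {i₀ j₀ : Fin (k + 1)} (hunit : |A i₀ j₀| = 1) (hzero : ∀ j, j ≠ j₀ → A i₀ j = 0) :
    A.SolutionsHalfIntegral := by
  intro x hx
  set B := A.submatrix i₀.succAbove j₀.succAbove
  have hB : B.det ≠ 0 := fun h => hdet (by rw [det_succ_row_single A i₀ j₀ hzero, h]; ring)
  have hpivot : x j₀ ∈ (⊥ : Subring ℚ) := by
    refine mem_bot_of_intCast_mul_mem_bot hunit ?_
    have hrow := hx i₀
    rwa [mulVec, dotProduct, sum_eq_single j₀ (fun j _ hj => by simp [hzero j hj]) (by simp)]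
      at hrow
  have hy : ∀ i, (B.map ((↑) : ℤ → ℚ) *ᵥ (x ∘ j₀.succAbove)) i ∈ (⊥ : Subring ℚ) := by
    intro i
    rw [← submatrix_map, submatrix_succAbove_mulVec]
    exact sub_mem (hx _) (mul_mem (intCast_mem _ _) hpivot)
  have hsub := sum_abs_submatrix_le A (Fin.succAbove_right_injective (p := i₀)) j₀.succAbove
  have hsol := IH B (fun j => (hsub j).trans (hcol _)) hB _ hy
  exact Fin.succAboveCases j₀ ⟨by simpa using mul_mem (intCast_mem _ 2) hpivot, fun _ => hpivot⟩
    fun j => ⟨(hsol j).1, fun h => (hsol j).2 ((hsub j).trans h)⟩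

theorem two_mul_mem_bot_of_row_pair
    (IH : ∀ B : Matrix (Fin k) (Fin k) ℤ, (∀ j, ∑ i, |B i j| ≤ 2) → B.det ≠ 0 →
      B.SolutionsHalfIntegral)
    (A : Matrix (Fin (k + 1)) (Fin (k + 1)) ℤ) (hcol : ∀ j, ∑ i, |A i j| ≤ 2) (hdet : A.det ≠ 0)
    {i₀ j₁ j₂ : Fin (k + 1)} (hne : j₁ ≠ j₂) (h₁ : |A i₀ j₁| = 1) (h₂ : |A i₀ j₂| = 1)
    (hzero : ∀ j, j ≠ j₁ → j ≠ j₂ → A i₀ j = 0)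
    (x : Fin (k + 1) → ℚ) (hx : ∀ i, (A.map ((↑) : ℤ → ℚ) *ᵥ x) i ∈ (⊥ : Subring ℚ)) :
    ∀ j, 2 * x j ∈ (⊥ : Subring ℚ) := by
  set d := -(A i₀ j₁ * A i₀ j₂)
  set T := A * transvection j₁ j₂ d
  have hT₂ : ∀ i, T i j₂ = A i j₂ + d * A i j₁ := fun i => mul_transvection_apply_same ..
  have hT : ∀ i j, j ≠ j₂ → T i j = A i j := fun i j hj => by simp [T, hj]
  have hTpivot : T i₀ j₂ = 0 := by
    have : A i₀ j₁ * A i₀ j₁ = 1 := by rw [← abs_mul_abs_self, h₁, one_mul]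
    rw [hT₂]
    linear_combination (-A i₀ j₂) * this
  have hTcol : ∀ j, ∑ i, |T i j| ≤ 2 := by
    intro j
    rcases eq_or_ne j j₂ with rfl | hj
    · have hd : |d| ≤ 1 := by rw [abs_neg, abs_mul, h₁, h₂, one_mul]
      have : ∑ i, |T i j| + |A i₀ j| + |A i₀ j₁| ≤ ∑ i, |A i j| + ∑ i, |A i j₁| :=
        sum_abs_mul_transvection_le A i₀ hd hTpivot
      have := hcol j
      have := hcol j₁
      omega
    · simpa only [hT _ _ hj] using hcol j
  have hTdet : T.det ≠ 0 := by rwa [det_mul, det_transvection_of_ne (h := hne), mul_one]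
  have hTsol := solutionsHalfIntegral_of_row_single IH T hTcol hTdet (i₀ := i₀) (j₀ := j₁)
    (by rw [hT _ _ hne, h₁]) fun j hj => by
      rcases eq_or_ne j j₂ with rfl | hj₂
      · exact hTpivot
      · rw [hT _ _ hj₂, hzero j hj hj₂]
  set y := transvection j₁ j₂ (-d : ℚ) *ᵥ x
  have hxy : x = (transvection j₁ j₂ d).map ((↑) : ℤ → ℚ) *ᵥ y := by
    have hE : (transvection j₁ j₂ d).map ((↑) : ℤ → ℚ) = transvection j₁ j₂ (d : ℚ) :=
      map_transvection (Int.castRingHom ℚ) j₁ j₂ d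
    rw [mulVec_mulVec, hE, transvection_mul_transvection_same (h := hne), add_neg_cancel,
      transvection_zero, one_mulVec]
  have hTy : ∀ i, (T.map ((↑) : ℤ → ℚ) *ᵥ y) i ∈ (⊥ : Subring ℚ) := by
    have hTmap : T.map ((↑) : ℤ → ℚ) = A.map (↑) * (transvection j₁ j₂ d).map (↑) :=
      Matrix.map_mul (f := Int.castRingHom ℚ)
    rwa [hTmap, ← mulVec_mulVec, ← hxy]
  rw [hxy]
  exact two_mul_intCast_mulVec_mem_bot _ fun j => (hTsol y hTy j).1

theorem solutionsHalfIntegral_of_forall_exists_ne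
    (IH : ∀ B : Matrix (Fin k) (Fin k) ℤ, (∀ j, ∑ i, |B i j| ≤ 2) → B.det ≠ 0 →
      B.SolutionsHalfIntegral)
    (A : Matrix (Fin (k + 1)) (Fin (k + 1)) ℤ) (hcol : ∀ j, ∑ i, |A i j| ≤ 2) (hdet : A.det ≠ 0)
    (hspread : ∀ i j, ∃ i', i' ≠ i ∧ A i' j ≠ 0) : A.SolutionsHalfIntegral := by
  have hpair : ∀ j {i i'}, i ≠ i' → |A i j| + |A i' j| ≤ ∑ i, |A i j| := fun j _ _ hne =>
    add_le_sum (f := fun i => |A i j|) (fun _ _ => abs_nonneg _) (mem_univ _) (mem_univ _) hne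
  have hunit : ∀ i j, A i j ≠ 0 → |A i j| = 1 := by
    intro i j h
    obtain ⟨i', hi', h'⟩ := hspread i j
    have := hpair j hi'.symm
    have := hcol j
    have := Int.one_le_abs h
    have := Int.one_le_abs h'
    omega
  have htwo : ∀ j, 1 < ∑ i, |A i j| := by
    intro j
    obtain ⟨i₁, -, h₁⟩ := hspread 0 j
    obtain ⟨i₂, hi₂, h₂⟩ := hspread i₁ j
    have := hpair j hi₂.symm
    have := Int.one_le_abs h₁
    have := Int.one_le_abs h₂
    omega
  obtain ⟨i₀, -, hrow⟩ : ∃ i ∈ univ, ∑ j, |A i j| ≤ 2 :=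
    exists_le_of_sum_le univ_nonempty (by rw [sum_comm]; exact sum_le_sum fun j _ => hcol j)
  obtain ⟨j₁, hj₁⟩ : ∃ j, A i₀ j ≠ 0 := by
    by_contra! h
    exact hdet (det_eq_zero_of_row_eq_zero i₀ h)
  intro x hx
  suffices hhalf : ∀ j, 2 * x j ∈ (⊥ : Subring ℚ) from
    fun j => ⟨hhalf j, fun h => absurd h (not_le.2 (htwo j))⟩
  by_cases hsecond : ∃ j₂, j₂ ≠ j₁ ∧ A i₀ j₂ ≠ 0
  · obtain ⟨j₂, hne, hj₂⟩ := hsecond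
    refine two_mul_mem_bot_of_row_pair IH A hcol hdet hne.symm (hunit _ _ hj₁) (hunit _ _ hj₂)
      (fun j h₁ h₂ => ?_) x hx
    have hsub := sum_le_univ_sum_of_nonneg (s := {j, j₁, j₂}) (f := fun j => |A i₀ j|)
      fun _ => abs_nonneg _
    rw [sum_insert (by simp [h₁, h₂]), sum_pair hne.symm, hunit _ _ hj₁, hunit _ _ hj₂] at hsub
    exact abs_nonpos_iff.1 (by omega)
  · push Not at hsecond
    exact fun j => (solutionsHalfIntegral_of_row_single IH A hcol hdet (hunit _ _ hj₁)
      hsecond x hx j).1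

theorem solutionsHalfIntegral_of_sum_abs_le_two :
    ∀ {k : ℕ} (A : Matrix (Fin k) (Fin k) ℤ), (∀ j, ∑ i, |A i j| ≤ 2) → A.det ≠ 0 →
      A.SolutionsHalfIntegral
  | 0, _, _, _ => fun _ _ j => j.elim0
  | _ + 1, A, hcol, hdet => by
    by_cases hsingle : ∃ i₀ j₀, ∀ i, i ≠ i₀ → A i j₀ = 0
    · obtain ⟨i₀, j₀, hzero⟩ := hsingle
      exact solutionsHalfIntegral_of_column_single solutionsHalfIntegral_of_sum_abs_le_two
        A hcol hdet hzero
    · push Not at hsingle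
      exact solutionsHalfIntegral_of_forall_exists_ne solutionsHalfIntegral_of_sum_abs_le_two
        A hcol hdet hsingle

end Matrix

theorem stmt17_general {m n k : ℕ} (M : Matrix (Fin m) (Fin n) ℤ)
    (hcol : ∀ j : Fin n, ∑ i, |M i j| ≤ 2)
    (r : Fin k → Fin m) (c : Fin k → Fin n)
    (hr : Function.Injective r)
    (S : Matrix (Fin k) (Fin k) ℚ)
    (hS : S = (M.submatrix r c).map (fun x => (x : ℚ)))
    (hdet : S.det ≠ 0) :
    ∀ i j : Fin k, ∃ z : ℤ, S⁻¹ i j = (z : ℚ) / 2 := by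
  intro i j
  have hdetA : (M.submatrix r c).det ≠ 0 := by
    have hcast : ((M.submatrix r c).det : ℚ) = S.det := by
      rw [hS]
      exact (Int.castRingHom ℚ).map_det _
    exact_mod_cast hcast ▸ hdet
  have hx : ∀ i, ((M.submatrix r c).map ((↑) : ℤ → ℚ) *ᵥ (S⁻¹ *ᵥ Pi.single j 1)) i ∈
      (⊥ : Subring ℚ) := by
    rw [← hS, mulVec_mulVec, mul_nonsing_inv _ (isUnit_iff_ne_zero.2 hdet), one_mulVec]
    intro i
    rcases eq_or_ne i j with rfl | hij
    · simp
    · simp [hij]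
  obtain ⟨z, hz⟩ := Subring.mem_bot.1 (solutionsHalfIntegral_of_sum_abs_le_two _
    (fun j => (sum_abs_submatrix_le M hr c j).trans (hcol _)) hdetA _ hx i).1
  refine ⟨z, ?_⟩
  rw [hz, mulVec_single_one, col_apply]
  ring

/-- if every column of an integer matrix has entries whose
absolute values sum to at most 2, then the inverse of every non-singular square
submatrix is half-integral. -/
theorem stmt17 {m n k : ℕ} (M : Matrix (Fin m) (Fin n) ℤ)
    (hcol : ∀ j : Fin n, ∑ i, |M i j| ≤ 2)
    (r : Fin k → Fin m) (c : Fin k → Fin n)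
    (hr : Function.Injective r) (hc : Function.Injective c)
    (S : Matrix (Fin k) (Fin k) ℚ)
    (hS : S = (M.submatrix r c).map (fun x => (x : ℚ)))
    (hdet : S.det ≠ 0) :
    ∀ i j : Fin k, ∃ z : ℤ, S⁻¹ i j = (z : ℚ) / 2 :=
  stmt17_general M hcol r c hr S hS hdet
end
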